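/- Order transfer across a common nesting point (abstraction of Lemma 2): let r be a point and for i = 1,…,n let edges (sᵢ, xᵢ) satisfy π(sᵢ) < π(r) < π(xᵢ), with all positions distinct and the edges pairwise noncrossing within one page; let additionally edges (uⱼ, xⱼ) for j in a subset S ⊆ {1,…,n} satisfy π(r) < π(uⱼ) < π(xⱼ), these edges lying on a different page, pairwise noncrossing, and noncrossing with nothing else required. If moreover π(sᵢ) < π(uⱼ) for all i and all j ∈ S, then for j, j' ∈ S: π(uⱼ) < π(u_{j'}) implies π(xⱼ) < π(x_{j'}). -/

import Mathlib

/-- Two spine edges with left endpoints `u, x` and right endpoints `v, y` cross. -/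
def EdgeCross (u v x y : ℤ) : Prop :=
  (u < x ∧ x < v ∧ v < y) ∨ (x < u ∧ u < y ∧ y < v)

lemma lt_of_not_edgeCross {u v x y : ℤ} (h : ¬EdgeCross u v x y) (hxu : x < u) (huy : u < y)
    (hvy : v ≠ y) : v < y := by
  unfold EdgeCross at h
  omega

theorem order_transfer_common_point_general {n : ℕ}
    (s x u : Fin n → ℤ) (r : ℤ) (S : Finset (Fin n))
    (hx_inj : Function.Injective x)
    (hu_span : ∀ j ∈ S, r < u j ∧ u j < x j)
    (hux_sx_nc : ∀ j ∈ S, ∀ i, ¬EdgeCross (u j) (x j) (s i) (x i))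
    (hsu : ∀ i, ∀ j ∈ S, s i < u j) :
    ∀ j ∈ S, ∀ j' ∈ S, u j < u j' → x j < x j' := by
  intro j hj j' hj' hlt
  have hne : j ≠ j' := ne_of_apply_ne u hlt.ne
  -- `x j' < x j` would make `(s j', x j')` cross `(u j, x j)`, as `s j' < u j < u j' < x j'`.
  exact lt_of_not_edgeCross (hux_sx_nc j hj j') (hsu j' j hj) (hlt.trans (hu_span j' hj').2)
    (hx_inj.ne hne)

/-- Order transfer across a common nesting point (abstraction of Lemma 2). -/
theorem order_transfer_common_point {n : ℕ}
    (s x u : Fin n → ℤ) (r : ℤ) (S : Finset (Fin n))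
    (hspan : ∀ i, s i < r ∧ r < x i)
    (hs_inj : Function.Injective s) (hx_inj : Function.Injective x)
    (hu_inj : ∀ j ∈ S, ∀ j' ∈ S, u j = u j' → j = j')
    (hu_distinct : ∀ j ∈ S, ∀ i, u j ≠ s i ∧ u j ≠ x i)
    (hsx_nc : ∀ i j, i ≠ j → ¬EdgeCross (s i) (x i) (s j) (x j))
    (hu_span : ∀ j ∈ S, r < u j ∧ u j < x j)
    (hux_nc : ∀ j ∈ S, ∀ j' ∈ S, j ≠ j' → ¬EdgeCross (u j) (x j) (u j') (x j'))
    (hux_sx_nc : ∀ j ∈ S, ∀ i, ¬EdgeCross (u j) (x j) (s i) (x i))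
    (hsu : ∀ i, ∀ j ∈ S, s i < u j) :
    ∀ j ∈ S, ∀ j' ∈ S, u j < u j' → x j < x j' :=
  order_transfer_common_point_general s x u r S hx_inj hu_span hux_sx_nc hsu
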